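/- Let L̃ = |ṽ3^0⟩⟨ṽ1^0| + |ṽ3^1⟩⟨ṽ1^0| + |ṽ3^0⟩⟨ṽ2^0| − |ṽ3^1⟩⟨ṽ2^0| on C^4. The function ρ_t = e^{-2t}|ṽ1^0⟩⟨ṽ1^0| + (1/2)e^{-2t}(e^{2t} − 1)(|ṽ3^0⟩+|ṽ3^1⟩)(⟨ṽ3^0|+⟨ṽ3^1|) solves dρ/dt = L̃ρL̃† − (1/2){L̃†L̃, ρ} with ρ_0 = |ṽ1^0⟩⟨ṽ1^0|, and ⟨ṽ2^0|ρ_t|ṽ2^0⟩ = 0 for all t ≥ 0. -/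

import Mathlib

/-!
Write `P = |ṽ1^0⟩⟨ṽ1^0|` and `W = (|ṽ3^0⟩+|ṽ3^1⟩)(⟨ṽ3^0|+⟨ṽ3^1|)`, so that
`ρ_t = e^{-2t} P + ½(1 - e^{-2t}) W`. The dissipator `D ρ = L̃ρL̃† - ½{L̃†L̃, ρ}` is linear, with
`D P = -2P + W` (because `L̃|ṽ1^0⟩ = |ṽ3^0⟩+|ṽ3^1⟩` and `L̃†L̃ = 2` on `ṽ1^0`) and `D W = 0`
(because `L̃` vanishes on the `ṽ3` block). Hence `D ρ_t = e^{-2t}(-2P + W) = dρ_t/dt`.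
Neither `P` nor `W` has an entry at `ṽ2^0`, which gives the last claim.
-/

open Matrix

section LindbladDissipator

variable {𝕜 n : Type*} [RCLike 𝕜] [Fintype n]

def lindbladDissipator (L : Matrix n n 𝕜) : Matrix n n 𝕜 →ₗ[𝕜] Matrix n n 𝕜 where
  toFun ρ := L * ρ * Lᴴ - (1/2 : 𝕜) • (Lᴴ * L * ρ + ρ * (Lᴴ * L))
  map_add' ρ σ := by
    simp only [Matrix.mul_add, Matrix.add_mul, smul_add]
    abel
  map_smul' c ρ := by
    simp only [Matrix.mul_smul, Matrix.smul_mul, smul_add, smul_sub, smul_comm c, RingHom.id_apply]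

end LindbladDissipator

theorem HasDerivAt.smul_add_smul_apply {m n : Type*} {a b : ℝ → ℂ} {a' b' : ℂ} {t : ℝ}
    (ha : HasDerivAt a a' t) (hb : HasDerivAt b b' t) (A B : Matrix m n ℂ) (i : m) (j : n) :
    HasDerivAt (fun s => (a s • A + b s • B) i j) ((a' • A + b' • B) i j) t := by
  simp only [Matrix.add_apply, Matrix.smul_apply, smul_eq_mul]
  exact (ha.mul_const (A i j)).add (hb.mul_const (B i j))

theorem hasDerivAt_ofReal_exp_const_mul (c t : ℝ) :
    HasDerivAt (fun s : ℝ => (Real.exp (c * s) : ℂ)) (c * Real.exp (c * t)) t := by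
  simpa [mul_comm] using ((hasDerivAt_id t).const_mul c).exp.ofReal_comp

theorem hasDerivAt_half_exp_neg_two_mul_exp_two_mul_sub_one (t : ℝ) :
    HasDerivAt (fun s : ℝ => (1/2 : ℂ) * Real.exp (-2 * s) * (Real.exp (2 * s) - 1))
      (Real.exp (-2 * t)) t := by
  have hsimp : (fun s : ℝ => (1/2 : ℂ) * Real.exp (-2 * s) * (Real.exp (2 * s) - 1))
      = fun s : ℝ => (1/2 : ℂ) * (1 - Real.exp (-2 * s)) := by
    funext s
    have hinv : (Real.exp (-2 * s) : ℂ) * Real.exp (2 * s) = 1 := by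
      rw [← Complex.ofReal_mul, ← Real.exp_add]
      simp
    linear_combination (1/2 : ℂ) * hinv
  rw [hsimp]
  refine (((hasDerivAt_ofReal_exp_const_mul (-2) t).const_sub 1).const_mul (1/2 : ℂ)).congr_deriv ?_
  push_cast
  ring

def Ltilde : Matrix (Fin 4) (Fin 4) ℂ := !![0,0,0,0; 0,0,0,0; 1,1,0,0; 1,-1,0,0]

def projV₁ : Matrix (Fin 4) (Fin 4) ℂ := !![1,0,0,0; 0,0,0,0; 0,0,0,0; 0,0,0,0]

def outerW : Matrix (Fin 4) (Fin 4) ℂ := !![0,0,0,0; 0,0,0,0; 0,0,1,1; 0,0,1,1]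

theorem lindbladDissipator_Ltilde_projV₁ :
    lindbladDissipator Ltilde projV₁ = (-2 : ℂ) • projV₁ + outerW := by
  ext i j
  simp only [lindbladDissipator, LinearMap.coe_mk, AddHom.coe_mk, Matrix.sub_apply,
    Matrix.add_apply, Matrix.smul_apply, mul_apply, Fin.sum_univ_four, conjTranspose_apply]
  fin_cases i <;> fin_cases j <;> simp [Ltilde, projV₁, outerW]
  norm_num

theorem lindbladDissipator_Ltilde_outerW : lindbladDissipator Ltilde outerW = 0 := by
  ext i j
  simp only [lindbladDissipator, LinearMap.coe_mk, AddHom.coe_mk, Matrix.sub_apply,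
    Matrix.add_apply, Matrix.smul_apply, mul_apply, Fin.sum_univ_four, conjTranspose_apply]
  fin_cases i <;> fin_cases j <;> simp [Ltilde, outerW]

/-- For L̃ = |ṽ3^0⟩⟨ṽ1^0| + |ṽ3^1⟩⟨ṽ1^0| + |ṽ3^0⟩⟨ṽ2^0| − |ṽ3^1⟩⟨ṽ2^0| on ℂ⁴
(basis ṽ1^0, ṽ2^0, ṽ3^0, ṽ3^1), the family
ρ_t = e^{-2t}|ṽ1^0⟩⟨ṽ1^0| + (1/2)e^{-2t}(e^{2t}−1)(|ṽ3^0⟩+|ṽ3^1⟩)(⟨ṽ3^0|+⟨ṽ3^1|)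
solves the Lindblad equation with ρ_0 = |ṽ1^0⟩⟨ṽ1^0|, and ⟨ṽ2^0|ρ_t|ṽ2^0⟩ = 0 for t ≥ 0. -/
theorem stmt9 :
    let L : Matrix (Fin 4) (Fin 4) ℂ := !![0,0,0,0; 0,0,0,0; 1,1,0,0; 1,-1,0,0]
    let ρ : ℝ → Matrix (Fin 4) (Fin 4) ℂ := fun t =>
      (Real.exp (-2*t) : ℂ) • !![1,0,0,0; 0,0,0,0; 0,0,0,0; 0,0,0,0]
        + ((1/2 : ℂ) * (Real.exp (-2*t) : ℂ) * ((Real.exp (2*t) : ℂ) - 1)) •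
          !![0,0,0,0; 0,0,0,0; 0,0,1,1; 0,0,1,1]
    (∀ (t : ℝ) (i j : Fin 4), HasDerivAt (fun s => ρ s i j)
        ((L * ρ t * Lᴴ - (1/2 : ℂ) • (Lᴴ * L * ρ t + ρ t * (Lᴴ * L))) i j) t) ∧
    ρ 0 = !![1,0,0,0; 0,0,0,0; 0,0,0,0; 0,0,0,0] ∧
    (∀ t : ℝ, 0 ≤ t → ρ t 1 1 = 0) := by
  intro L ρ
  refine ⟨fun t i j => ?_, ?_, fun t _ => ?_⟩
  · have hdiss : lindbladDissipator Ltilde (ρ t)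
        = ((-2 : ℝ) * Real.exp (-2 * t) : ℂ) • projV₁ + (Real.exp (-2 * t) : ℂ) • outerW := by
      change lindbladDissipator Ltilde (_ • projV₁ + _ • outerW) = _
      rw [map_add, map_smul, map_smul, lindbladDissipator_Ltilde_projV₁,
        lindbladDissipator_Ltilde_outerW, smul_zero, add_zero, smul_add, smul_smul]
      push_cast
      ring_nf
    change HasDerivAt _ (lindbladDissipator Ltilde (ρ t) i j) t
    rw [hdiss]
    exact (hasDerivAt_ofReal_exp_const_mul (-2) t).smul_add_smul_apply
      (hasDerivAt_half_exp_neg_two_mul_exp_two_mul_sub_one t) projV₁ outerW i j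
  · ext i j
    fin_cases i <;> fin_cases j <;> simp [ρ]
  · simp [ρ]
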